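/- Explicit transformation of the spherical Green function under Möbius maps: G_ĝ(ψ(x), ψ(y)) = G_ĝ(x, y) − (1/4)(φ(x) + φ(y)), where e^{φ} = ĝ_ψ/ĝ with ĝ_ψ(z) = |ψ'(z)|² ĝ(ψ(z)), and G_ĝ(x,y) = ln(1/|x−y|) − (1/4)(ln ĝ(x) + ln ĝ(y)) + ln 2 − 1/2. -/

import Mathlib

/-- The round metric density `ĝ(z) = 4/(1+|z|²)²` on the plane. -/
noncomputable def roundMetric (z : ℂ) : ℝ := 4 / (1 + ‖z‖^2)^2

/-- The Green function for the round metric: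
`G_ĝ(x,y) = ln(1/|x−y|) − (1/4)(ln ĝ(x) + ln ĝ(y)) + ln 2 − 1/2`. -/
noncomputable def greenRound (x y : ℂ) : ℝ :=
  Real.log (1 / ‖x - y‖) - (1/4) * (Real.log (roundMetric x) + Real.log (roundMetric y))
    + Real.log 2 - 1/2

/-! Möbius maps with `ad - bc = 1` satisfy `|ψ x - ψ y|² = |ψ' x| |ψ' y| |x - y|²`, since
`ψ' z = 1/(cz + d)²`. Taking logarithms, the change of `ln(1/|x - y|)` is exactly absorbed by the
`ln |ψ'|` parts of the conformal factors `φ = ln(|ψ'|² ĝ∘ψ / ĝ)`, and the `ln ĝ` terms of the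
Green function account for the rest. -/

open Real

section Mobius

variable {𝕜 : Type*} (a b c d : 𝕜)

theorem mobius_sub_mobius_sq [Field 𝕜] {x y : 𝕜} (hx : c * x + d ≠ 0) (hy : c * y + d ≠ 0) :
    ((a * x + b) / (c * x + d) - (a * y + b) / (c * y + d)) ^ 2
      = (a * d - b * c) / (c * x + d) ^ 2 * ((a * d - b * c) / (c * y + d) ^ 2) * (x - y) ^ 2 := by
  rw [div_sub_div _ _ hx hy, div_pow, div_mul_div_comm, div_mul_eq_mul_div, mul_pow]
  congr 1
  ring

theorem hasDerivAt_mobius [NontriviallyNormedField 𝕜] {z : 𝕜} (hz : c * z + d ≠ 0) :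
    HasDerivAt (fun w => (a * w + b) / (c * w + d)) ((a * d - b * c) / (c * z + d) ^ 2) z := by
  have hnum : HasDerivAt (fun w => a * w + b) a z := by
    simpa using ((hasDerivAt_id z).const_mul a).add_const b
  have hden : HasDerivAt (fun w => c * w + d) c z := by
    simpa using ((hasDerivAt_id z).const_mul c).add_const d
  exact (hnum.div hden hz).congr_deriv (by ring)

end Mobius

theorem roundMetric_pos (z : ℂ) : 0 < roundMetric z := by
  unfold roundMetric
  positivity

theorem greenRound_eq_of_norm_sub_sq {x y p q : ℂ} {u v : ℝ} (hu : 0 < u) (hv : 0 < v)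
    (hxy : x ≠ y) (h : ‖p - q‖ ^ 2 = u * v * ‖x - y‖ ^ 2) :
    greenRound p q = greenRound x y
      - (1/4) * (log (u ^ 2 * roundMetric p / roundMetric x)
        + log (v ^ 2 * roundMetric q / roundMetric y)) := by
  have hxy' : 0 < ‖x - y‖ := norm_pos_iff.mpr (sub_ne_zero.mpr hxy)
  have hlog_dist : log ‖p - q‖ = (log u + log v) / 2 + log ‖x - y‖ := by
    have := congrArg log h
    rw [log_pow, log_mul (by positivity) (by positivity), log_mul hu.ne' hv.ne', log_pow] at this
    push_cast at this
    linarith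
  have hlog_factor : ∀ (w : ℝ) (z ζ : ℂ), 0 < w →
      log (w ^ 2 * roundMetric ζ / roundMetric z)
        = 2 * log w + log (roundMetric ζ) - log (roundMetric z) := by
    intro w z ζ hw
    rw [log_div (by positivity [roundMetric_pos ζ]) (roundMetric_pos z).ne',
      log_mul (by positivity) (roundMetric_pos ζ).ne', log_pow]
    push_cast
    ring
  unfold greenRound
  simp only [hlog_factor u x p hu, hlog_factor v y q hv, one_div, log_inv, hlog_dist]
  ring

/-- Explicit transformation of the spherical Green function under Möbius maps:
`G_ĝ(ψ(x), ψ(y)) = G_ĝ(x, y) − (1/4)(φ(x) + φ(y))`, where `e^φ = ĝ_ψ/ĝ` with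
`ĝ_ψ(z) = |ψ'(z)|² ĝ(ψ(z))`. -/
theorem statement13 (a b c d : ℂ) (habcd : a * d - b * c = 1)
    (ψ : ℂ → ℂ) (hψ : ∀ z, ψ z = (a * z + b) / (c * z + d))
    (φ : ℂ → ℝ)
    (hφ : ∀ z, Real.exp (φ z) = (‖deriv ψ z‖^2 * roundMetric (ψ z)) / roundMetric z)
    (x y : ℂ) (hx : c * x + d ≠ 0) (hy : c * y + d ≠ 0) (hxy : x ≠ y) :
    greenRound (ψ x) (ψ y) = greenRound x y - (1/4) * (φ x + φ y) := by
  have hderiv : ∀ z, c * z + d ≠ 0 → deriv ψ z = 1 / (c * z + d) ^ 2 := by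
    intro z hz
    rw [funext hψ, (hasDerivAt_mobius a b c d hz).deriv, habcd]
  have hderiv_pos : ∀ z, c * z + d ≠ 0 → 0 < ‖deriv ψ z‖ := by
    intro z hz
    simp [hderiv z hz, hz]
  have hφ_eq : ∀ z, φ z = log (‖deriv ψ z‖ ^ 2 * roundMetric (ψ z) / roundMetric z) := by
    intro z
    rw [← hφ z, log_exp]
  have hdist : ‖ψ x - ψ y‖ ^ 2 = ‖deriv ψ x‖ * ‖deriv ψ y‖ * ‖x - y‖ ^ 2 := by
    rw [← norm_pow, hψ, hψ, mobius_sub_mobius_sq a b c d hx hy, habcd, hderiv x hx, hderiv y hy,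
      norm_mul, norm_mul, norm_pow]
  rw [hφ_eq x, hφ_eq y]
  exact greenRound_eq_of_norm_sub_sq (hderiv_pos x hx) (hderiv_pos y hy) hxy hdist
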